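/- With the definitions below, for every r with 0 < r < R₂ the function f is twice differentiable at r and satisfies c·f(r) + f′(r)·(r·κ*(r) + A) + (D²/2)·f″(r) ≤ 0; moreover f″(r) ≤ 0 for every r ∈ (0,∞) with r ≠ R₂. -/

import Mathlib

/-!
On `[0, ∞)` the drift `u·κ*(u) + A` equals `max (u·κ(u) + A) 0`, which is continuous and
nonnegative, so `φ`, `Φ`, `g` and `f` are primitives of functions continuous on `[0, ∞)` and
the fundamental theorem of calculus gives `f′ = φ · g(· ∧ R₂)`, `φ′ = −(2/D²)(r κ* + A) φ` and
`g′ = −(2c/D²) Φ/φ`. For `r < R₂` the left-hand side therefore collapses to `c (f − Φ)`, which is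
`≤ 0` because `g ≤ 1`. The choice of `c` makes `g(R₂) = 1/2`, so `g ≥ 1/2` on `[0, R₂]`, and
then `f″ ≤ 0` away from `R₂` is a sign count.
-/

/-- `κ*(r) = κ(r)` if `r·κ(r) ≥ −A`, and `κ*(r) = −A/r` otherwise. -/
noncomputable def kstar (κ : ℝ → ℝ) (A r : ℝ) : ℝ :=
  if -A ≤ r * κ r then κ r else -A / r

/-- `φ(r) = exp(−(2/D²) ∫₀ʳ (u·κ*(u) + A) du)`. -/
noncomputable def phi (κ : ℝ → ℝ) (A D r : ℝ) : ℝ :=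
  Real.exp (-(2 / D ^ 2) * ∫ u in (0:ℝ)..r, (u * kstar κ A u + A))

/-- `Φ(r) = ∫₀ʳ φ(s) ds`. -/
noncomputable def PhiF (κ : ℝ → ℝ) (A D r : ℝ) : ℝ :=
  ∫ s in (0:ℝ)..r, phi κ A D s

/-- `c = D² / (4 ∫₀^{R₂} Φ(s) φ(s)⁻¹ ds)`. -/
noncomputable def cconst (κ : ℝ → ℝ) (A D R₂ : ℝ) : ℝ :=
  D ^ 2 / (4 * ∫ s in (0:ℝ)..R₂, PhiF κ A D s * (phi κ A D s)⁻¹)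

/-- `g(r) = 1 − (2c/D²) ∫₀ʳ Φ(s) φ(s)⁻¹ ds`. -/
noncomputable def gfun (κ : ℝ → ℝ) (A D R₂ r : ℝ) : ℝ :=
  1 - (2 * cconst κ A D R₂ / D ^ 2) * ∫ s in (0:ℝ)..r, PhiF κ A D s * (phi κ A D s)⁻¹

/-- `f(r) = ∫₀ʳ φ(s)·g(s ∧ R₂) ds`. -/
noncomputable def ffun (κ : ℝ → ℝ) (A D R₂ r : ℝ) : ℝ :=
  ∫ s in (0:ℝ)..r, phi κ A D s * gfun κ A D R₂ (min s R₂)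

open Set Filter Topology intervalIntegral

theorem eqOn_primitive_comp_max {f : ℝ → ℝ} (a : ℝ) :
    EqOn (fun x => ∫ u in a..x, f u) (fun x => ∫ u in a..x, f (max u a)) (Ici a) := by
  intro x hx
  refine integral_congr fun u hu => ?_
  rw [uIcc_of_le hx] at hu
  simp only [max_eq_left hu.1]

theorem continuous_comp_max_of_continuousOn_Ici {f : ℝ → ℝ} {a : ℝ}
    (hf : ContinuousOn f (Ici a)) : Continuous fun u => f (max u a) :=
  hf.comp_continuous (continuous_id.max continuous_const) fun u => le_max_right u a

theorem continuousOn_primitive_Ici {f : ℝ → ℝ} {a : ℝ} (hf : ContinuousOn f (Ici a)) :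
    ContinuousOn (fun x => ∫ u in a..x, f u) (Ici a) :=
  (continuous_primitive (fun _ _ => (continuous_comp_max_of_continuousOn_Ici hf).intervalIntegrable
    _ _) a).continuousOn.congr (eqOn_primitive_comp_max a)

theorem hasDerivAt_primitive_of_continuousOn_Ici {f : ℝ → ℝ} {a x : ℝ}
    (hf : ContinuousOn f (Ici a)) (hx : a < x) :
    HasDerivAt (fun x => ∫ u in a..x, f u) (f x) x := by
  have h := ((continuous_comp_max_of_continuousOn_Ici hf).integral_hasStrictDerivAt a x).hasDerivAt
  rw [max_eq_left hx.le] at h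
  exact h.congr_of_eventuallyEq ((eqOn_primitive_comp_max a).eventuallyEq_of_mem (Ici_mem_nhds hx))

theorem ContinuousOn.intervalIntegrable_of_Ici {f : ℝ → ℝ} {a b : ℝ}
    (hf : ContinuousOn f (Ici a)) (hab : a ≤ b) : IntervalIntegrable f MeasureTheory.volume a b :=
  (hf.mono (uIcc_of_le hab ▸ Icc_subset_Ici_self)).intervalIntegrable

noncomputable def Gint (κ : ℝ → ℝ) (A D r : ℝ) : ℝ :=
  ∫ s in (0:ℝ)..r, PhiF κ A D s * (phi κ A D s)⁻¹

section

variable {κ : ℝ → ℝ} {A D R₂ r : ℝ}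

theorem drift_eq_max (hA : 0 ≤ A) {u : ℝ} (hu : 0 ≤ u) :
    u * kstar κ A u + A = max (u * κ u + A) 0 := by
  unfold kstar
  split_ifs with h
  · rw [max_eq_left (by linarith)]
  · have hu0 : u ≠ 0 := by
      rintro rfl
      simp only [zero_mul, neg_nonpos] at h
      exact h hA
    rw [max_eq_right (by linarith)]
    field_simp
    ring

theorem drift_nonneg (hA : 0 ≤ A) {u : ℝ} (hu : 0 ≤ u) : 0 ≤ u * kstar κ A u + A := by
  rw [drift_eq_max hA hu]
  exact le_max_right _ _

theorem continuousOn_drift (hA : 0 ≤ A) (hκc : ContinuousOn κ (Ici 0)) :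
    ContinuousOn (fun u => u * kstar κ A u + A) (Ici 0) :=
  have h : ContinuousOn (fun u => max (u * κ u + A) 0) (Ici 0) := by fun_prop
  h.congr fun _ hu => drift_eq_max hA hu

theorem phi_pos (r : ℝ) : 0 < phi κ A D r := Real.exp_pos _

theorem continuousOn_phi (hA : 0 ≤ A) (hκc : ContinuousOn κ (Ici 0)) :
    ContinuousOn (phi κ A D) (Ici 0) :=
  Real.continuous_exp.comp_continuousOn
    (continuousOn_const.mul (continuousOn_primitive_Ici (continuousOn_drift hA hκc)))

theorem hasDerivAt_phi (hA : 0 ≤ A) (hκc : ContinuousOn κ (Ici 0)) (hr : 0 < r) :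
    HasDerivAt (phi κ A D) (-(2 / D ^ 2) * (r * kstar κ A r + A) * phi κ A D r) r := by
  have h := ((hasDerivAt_primitive_of_continuousOn_Ici (continuousOn_drift hA hκc) hr).const_mul
    (-(2 / D ^ 2))).exp
  exact h.congr_deriv (mul_comm _ _)

theorem PhiF_nonneg (hr : 0 ≤ r) : 0 ≤ PhiF κ A D r :=
  integral_nonneg hr fun _ _ => (phi_pos _).le

theorem PhiF_pos (hA : 0 ≤ A) (hκc : ContinuousOn κ (Ici 0)) (hr : 0 < r) :
    0 < PhiF κ A D r :=
  intervalIntegral_pos_of_pos_on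
    ((continuousOn_phi hA hκc).intervalIntegrable_of_Ici hr.le)
    (fun _ _ => phi_pos _) hr

theorem continuousOn_PhiF (hA : 0 ≤ A) (hκc : ContinuousOn κ (Ici 0)) :
    ContinuousOn (PhiF κ A D) (Ici 0) :=
  continuousOn_primitive_Ici (continuousOn_phi hA hκc)

theorem continuousOn_PhiF_mul_inv_phi (hA : 0 ≤ A) (hκc : ContinuousOn κ (Ici 0)) :
    ContinuousOn (fun s => PhiF κ A D s * (phi κ A D s)⁻¹) (Ici 0) :=
  (continuousOn_PhiF hA hκc).mul ((continuousOn_phi hA hκc).inv₀ fun s _ => (phi_pos s).ne')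

theorem Gint_nonneg (hr : 0 ≤ r) : 0 ≤ Gint κ A D r :=
  integral_nonneg hr fun u hu => mul_nonneg (PhiF_nonneg hu.1) (inv_nonneg.2 (phi_pos u).le)

theorem Gint_pos (hA : 0 ≤ A) (hκc : ContinuousOn κ (Ici 0)) (hr : 0 < r) :
    0 < Gint κ A D r :=
  intervalIntegral_pos_of_pos_on
    ((continuousOn_PhiF_mul_inv_phi hA hκc).intervalIntegrable_of_Ici hr.le)
    (fun u hu => mul_pos (PhiF_pos hA hκc hu.1) (inv_pos.2 (phi_pos u))) hr

theorem Gint_le (hA : 0 ≤ A) (hκc : ContinuousOn κ (Ici 0)) (hr : 0 ≤ r) (hrR : r ≤ R₂) :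
    Gint κ A D r ≤ Gint κ A D R₂ :=
  integral_mono_interval le_rfl hr hrR
    (MeasureTheory.ae_restrict_of_forall_mem measurableSet_Ioc fun u hu =>
      mul_nonneg (PhiF_nonneg hu.1.le) (inv_nonneg.2 (phi_pos u).le))
    ((continuousOn_PhiF_mul_inv_phi hA hκc).intervalIntegrable_of_Ici (hr.trans hrR))

theorem cconst_nonneg (hR₂ : 0 ≤ R₂) : 0 ≤ cconst κ A D R₂ :=
  div_nonneg (sq_nonneg D) (mul_nonneg zero_le_four (Gint_nonneg hR₂))

theorem gfun_mem_Icc (hA : 0 ≤ A) (hD : D ≠ 0) (hκc : ContinuousOn κ (Ici 0)) (hR₂ : 0 < R₂)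
    (hr : 0 ≤ r) (hrR : r ≤ R₂) : gfun κ A D R₂ r ∈ Icc (1 / 2) 1 := by
  have hG := Gint_pos (D := D) hA hκc hR₂
  have hGr : 0 ≤ Gint κ A D r := Gint_nonneg hr
  have hGle : Gint κ A D r ≤ Gint κ A D R₂ := Gint_le hA hκc hr hrR
  have hg : gfun κ A D R₂ r = 1 - Gint κ A D r / (2 * Gint κ A D R₂) := by
    change 1 - 2 * (D ^ 2 / (4 * Gint κ A D R₂)) / D ^ 2 * Gint κ A D r = _
    field_simp
    ring
  have hq : Gint κ A D r / (2 * Gint κ A D R₂) ≤ 1 / 2 := by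
    rw [div_le_iff₀ (by positivity)]
    linarith
  have hq0 : 0 ≤ Gint κ A D r / (2 * Gint κ A D R₂) := by positivity
  rw [hg]
  exact ⟨by linarith, by linarith⟩

theorem continuousOn_gfun (hA : 0 ≤ A) (hκc : ContinuousOn κ (Ici 0)) :
    ContinuousOn (gfun κ A D R₂) (Ici 0) :=
  continuousOn_const.sub
    (continuousOn_const.mul (continuousOn_primitive_Ici (continuousOn_PhiF_mul_inv_phi hA hκc)))

theorem hasDerivAt_gfun (hA : 0 ≤ A) (hκc : ContinuousOn κ (Ici 0)) (hr : 0 < r) :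
    HasDerivAt (gfun κ A D R₂)
      (-(2 * cconst κ A D R₂ / D ^ 2) * (PhiF κ A D r * (phi κ A D r)⁻¹)) r := by
  rw [neg_mul]
  exact ((hasDerivAt_primitive_of_continuousOn_Ici (continuousOn_PhiF_mul_inv_phi hA hκc)
    hr).const_mul _).const_sub 1

theorem continuousOn_ffun_integrand (hA : 0 ≤ A) (hκc : ContinuousOn κ (Ici 0)) (hR₂ : 0 ≤ R₂) :
    ContinuousOn (fun s => phi κ A D s * gfun κ A D R₂ (min s R₂)) (Ici 0) :=
  (continuousOn_phi hA hκc).mul ((continuousOn_gfun hA hκc).comp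
    (continuous_id.min continuous_const).continuousOn fun _ hs => le_min hs hR₂)

theorem hasDerivAt_ffun (hA : 0 ≤ A) (hκc : ContinuousOn κ (Ici 0)) (hR₂ : 0 ≤ R₂)
    (hr : 0 < r) :
    HasDerivAt (ffun κ A D R₂) (phi κ A D r * gfun κ A D R₂ (min r R₂)) r :=
  hasDerivAt_primitive_of_continuousOn_Ici (continuousOn_ffun_integrand hA hκc hR₂) hr

theorem ffun_le_PhiF (hA : 0 ≤ A) (hD : D ≠ 0) (hκc : ContinuousOn κ (Ici 0)) (hR₂ : 0 < R₂)
    (hr : 0 ≤ r) : ffun κ A D R₂ r ≤ PhiF κ A D r := by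
  refine integral_mono_on hr
    ((continuousOn_ffun_integrand hA hκc hR₂.le).intervalIntegrable_of_Ici hr)
    ((continuousOn_phi hA hκc).intervalIntegrable_of_Ici hr) fun s hs => ?_
  have hg := (gfun_mem_Icc hA hD hκc hR₂ (le_min hs.1 hR₂.le) (min_le_right s R₂)).2
  exact mul_le_of_le_one_right (phi_pos s).le hg

theorem deriv_ffun (hA : 0 ≤ A) (hκc : ContinuousOn κ (Ici 0)) (hR₂ : 0 ≤ R₂) (hr : 0 < r) :
    deriv (ffun κ A D R₂) r = phi κ A D r * gfun κ A D R₂ (min r R₂) :=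
  (hasDerivAt_ffun hA hκc hR₂ hr).deriv

theorem hasDerivAt_deriv_ffun_of_lt (hA : 0 ≤ A) (hκc : ContinuousOn κ (Ici 0)) (hr : 0 < r)
    (hrR : r < R₂) :
    HasDerivAt (deriv (ffun κ A D R₂))
      (-(2 / D ^ 2) * ((r * kstar κ A r + A) * phi κ A D r * gfun κ A D R₂ r
        + cconst κ A D R₂ * PhiF κ A D r)) r := by
  have heq : EqOn (deriv (ffun κ A D R₂)) (fun s => phi κ A D s * gfun κ A D R₂ s) (Ioo 0 R₂) :=
    fun s hs => by rw [deriv_ffun hA hκc (hr.le.trans hrR.le) hs.1, min_eq_left hs.2.le]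
  have h := (hasDerivAt_phi (D := D) hA hκc hr).mul (hasDerivAt_gfun (D := D) (R₂ := R₂) hA hκc hr)
  refine (h.congr_of_eventuallyEq (heq.eventuallyEq_of_mem (Ioo_mem_nhds hr hrR))).congr_deriv ?_
  have := (phi_pos (κ := κ) (A := A) (D := D) r).ne'
  field_simp
  ring

theorem hasDerivAt_deriv_ffun_of_gt (hA : 0 ≤ A) (hκc : ContinuousOn κ (Ici 0))
    (hR₂ : 0 ≤ R₂) (hr : R₂ < r) :
    HasDerivAt (deriv (ffun κ A D R₂))
      (-(2 / D ^ 2) * (r * kstar κ A r + A) * phi κ A D r * gfun κ A D R₂ R₂) r := by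
  have heq : EqOn (deriv (ffun κ A D R₂)) (fun s => phi κ A D s * gfun κ A D R₂ R₂) (Ioi R₂) :=
    fun s hs => by rw [deriv_ffun hA hκc hR₂ (hR₂.trans_lt hs), min_eq_right hs.le]
  exact ((hasDerivAt_phi hA hκc (hR₂.trans_lt hr)).mul_const _).congr_of_eventuallyEq
    (heq.eventuallyEq_of_mem (Ioi_mem_nhds hr))

end

theorem f_second_derivative_inequality_general
    (κ : ℝ → ℝ) (A D R₁ R₂ : ℝ)
    (hA : 0 ≤ A) (hD : 0 < D)
    (hκc : ContinuousOn κ (Set.Ici 0))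
    (hR₁ : 1 ≤ R₁)
    (hR₂ : R₁ < R₂) :
    (∀ r, 0 < r → r < R₂ →
      DifferentiableAt ℝ (deriv (ffun κ A D R₂)) r ∧
      cconst κ A D R₂ * ffun κ A D R₂ r
        + deriv (ffun κ A D R₂) r * (r * kstar κ A r + A)
        + D ^ 2 / 2 * deriv (deriv (ffun κ A D R₂)) r ≤ 0) ∧
    (∀ r, 0 < r → r ≠ R₂ →
      DifferentiableAt ℝ (deriv (ffun κ A D R₂)) r ∧
      deriv (deriv (ffun κ A D R₂)) r ≤ 0) := by
  have hR₂0 : 0 < R₂ := by linarith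
  have hc := cconst_nonneg (κ := κ) (A := A) (D := D) hR₂0.le
  refine ⟨fun r hr hrR => ?_, fun r hr hrR => ?_⟩
  · have h2 := hasDerivAt_deriv_ffun_of_lt (D := D) hA hκc hr hrR
    refine ⟨h2.differentiableAt, ?_⟩
    rw [h2.deriv, (hasDerivAt_ffun hA hκc hR₂0.le hr).deriv, min_eq_left hrR.le,
      ← mul_assoc, show D ^ 2 / 2 * -(2 / D ^ 2) = -1 by field_simp]
    have hf := mul_le_mul_of_nonneg_left (ffun_le_PhiF hA hD.ne' hκc hR₂0 hr.le) hc
    linarith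
  · have hw := drift_nonneg (κ := κ) hA hr.le
    have hφ := phi_pos (κ := κ) (A := A) (D := D) r
    rcases hrR.lt_or_gt with hlt | hgt
    · have h2 := hasDerivAt_deriv_ffun_of_lt (D := D) hA hκc hr hlt
      have hg := (gfun_mem_Icc hA hD.ne' hκc hR₂0 hr.le hlt.le).1
      refine ⟨h2.differentiableAt, h2.deriv ▸ ?_⟩
      rw [neg_mul, neg_nonpos]
      have := PhiF_nonneg (κ := κ) (A := A) (D := D) hr.le
      positivity
    · have h2 := hasDerivAt_deriv_ffun_of_gt (D := D) hA hκc hR₂0.le hgt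
      have hg := (gfun_mem_Icc hA hD.ne' hκc hR₂0 hR₂0.le le_rfl).1
      refine ⟨h2.differentiableAt, h2.deriv ▸ ?_⟩
      rw [neg_mul, neg_mul, neg_mul, neg_nonpos]
      positivity

/-- The second-derivative inequality for `f`: for `0 < r < R₂`,
`c·f(r) + f′(r)·(r·κ*(r) + A) + (D²/2)·f″(r) ≤ 0`; moreover `f″(r) ≤ 0`
for every `r > 0` with `r ≠ R₂`. -/
theorem f_second_derivative_inequality
    (κ : ℝ → ℝ) (A D R₁ R₂ : ℝ)
    (hA : 0 ≤ A) (hD : 0 < D)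
    (hκc : ContinuousOn κ (Set.Ici 0))
    (hκb : ∃ C, ∀ r, 0 ≤ r → |κ r| ≤ C)
    (hR₁ : 1 ≤ R₁) (hR₁' : ∀ r, R₁ ≤ r → r * κ r ≤ -A)
    (hR₂ : R₁ < R₂)
    (hR₂' : ∀ r, R₂ ≤ r → κ r ≤ -(D ^ 2 / (R₂ * (R₂ - R₁)) + A / R₂)) :
    (∀ r, 0 < r → r < R₂ →
      DifferentiableAt ℝ (deriv (ffun κ A D R₂)) r ∧
      cconst κ A D R₂ * ffun κ A D R₂ r
        + deriv (ffun κ A D R₂) r * (r * kstar κ A r + A)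
        + D ^ 2 / 2 * deriv (deriv (ffun κ A D R₂)) r ≤ 0) ∧
    (∀ r, 0 < r → r ≠ R₂ →
      DifferentiableAt ℝ (deriv (ffun κ A D R₂)) r ∧
      deriv (deriv (ffun κ A D R₂)) r ≤ 0) :=
  f_second_derivative_inequality_general κ A D R₁ R₂ hA hD hκc hR₁ hR₂
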